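/- Let S be a finite set with |S| = n. In the network D_SO^S, with source node (∅,∅,∅) and sink node (S,S,∅), let F(D_SO^S) ⊆ ℝ^A be the convex hull of the characteristic vectors χ^{A(P)} of the arc sets A(P) of all source–sink paths P, and let P_SO^S ⊆ ℝ^{S⋆S} be the convex hull of the characteristic vectors x^R of all semiorders R on S. Let π : ℝ^A → ℝ^{S⋆S} be the linear map with π(Φ)_{(i,j)} = Σ { Φ_a : a = ((X,Y,L),(Z,T,M)) ∈ A, i ∈ Y and j ∈ Z \ X }. Then π maps F(D_SO^S) onto P_SO^S, i.e., π(F(D_SO^S)) = P_SO^S. -/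

import Mathlib

open scoped Classical

/-- `L` is a strict linear order on the subset `T` of `S`: it only relates elements of
`T`, and is irreflexive, transitive and complete on `T`. -/
def IsStrictLinearOrderOn {S : Type*} (T : Finset S) (L : S → S → Prop) : Prop :=
  (∀ i j, L i j → i ∈ T ∧ j ∈ T) ∧
  (∀ i, ¬ L i i) ∧
  (∀ i j k, L i j → L j k → L i k) ∧
  (∀ i ∈ T, ∀ j ∈ T, i ≠ j → L i j ∨ L j i)

/-- Nodes of the network `D_SO^S`: triples `(X, Y, L)` with `Y ⊆ X ⊆ S` and `L` a strict
linear order on `X \ Y`. -/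
def SONode (S : Type*) [Fintype S] [DecidableEq S] :=
  {v : Finset S × Finset S × (S → S → Prop) //
    v.2.1 ⊆ v.1 ∧ IsStrictLinearOrderOn (v.1 \ v.2.1) v.2.2}

/-- The arc condition of the network `D_SO^S`.  From a node `(X, Y, L)` there is:
(α) for each `i ∈ S \ X`, an arc to `(X ∪ {i}, Y, L + i)` where `L + i` appends `i`
at the end (as new maximum) of `L`; and (β) if `X \ Y ≠ ∅`, an arc to
`(X, Y ∪ {j}, L − j)` where `j` is the first (minimum) element of `L` and `L − j` is the
restriction of `L` to `(X \ Y) \ {j}`. -/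
def SOArcCond {S : Type*} [Fintype S] [DecidableEq S] (v w : SONode S) : Prop :=
  (∃ i ∉ v.val.1,
      w.val.1 = insert i v.val.1 ∧ w.val.2.1 = v.val.2.1 ∧
      ∀ x y, (w.val.2.2 x y ↔ v.val.2.2 x y ∨ (x ∈ v.val.1 \ v.val.2.1 ∧ y = i))) ∨
  (∃ j ∈ v.val.1 \ v.val.2.1,
      (∀ x ∈ v.val.1 \ v.val.2.1, x ≠ j → v.val.2.2 j x) ∧
      w.val.1 = v.val.1 ∧ w.val.2.1 = insert j v.val.2.1 ∧
      ∀ x y, (w.val.2.2 x y ↔ v.val.2.2 x y ∧ x ≠ j ∧ y ≠ j))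

/-- Arcs of the network `D_SO^S`. -/
def SOArc (S : Type*) [Fintype S] [DecidableEq S] :=
  {a : SONode S × SONode S // SOArcCond a.1 a.2}

noncomputable instance (S : Type*) [Fintype S] [DecidableEq S] : Fintype (SONode S) := by
  unfold SONode; infer_instance

noncomputable instance (S : Type*) [Fintype S] [DecidableEq S] : Fintype (SOArc S) := by
  unfold SOArc; infer_instance

/-- The characteristic vectors `χ^{A(P)}` of the arc sets of all source–sink paths `P`
in `D_SO^S` (from source `(∅,∅,∅)` to sink `(S,S,∅)`). -/
noncomputable def soPathVectors (S : Type*) [Fintype S] [DecidableEq S] :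
    Set (SOArc S → ℝ) :=
  {Φ | ∃ (m : ℕ) (v : Fin (m + 1) → SONode S),
    (v 0).val.1 = ∅ ∧ (v 0).val.2.1 = ∅ ∧ (∀ x y, ¬ (v 0).val.2.2 x y) ∧
    (v (Fin.last m)).val.1 = Finset.univ ∧ (v (Fin.last m)).val.2.1 = Finset.univ ∧
    (∀ x y, ¬ (v (Fin.last m)).val.2.2 x y) ∧
    (∀ k : Fin m, SOArcCond (v k.castSucc) (v k.succ)) ∧
    Φ = fun a => if ∃ k : Fin m, (v k.castSucc, v k.succ) = a.val then 1 else 0}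

/-- The projection `π : ℝ^A → ℝ^{S⋆S}`, with
`π(Φ)_{(i,j)} = Σ { Φ_a : a = ((X,Y,L),(Z,T,M)) ∈ A, i ∈ Y and j ∈ Z \ X }`. -/
noncomputable def soProj (S : Type*) [Fintype S] [DecidableEq S] (Φ : SOArc S → ℝ) :
    {p : S × S // p.1 ≠ p.2} → ℝ :=
  fun p => ∑ a : SOArc S,
    if p.val.1 ∈ a.val.1.val.2.1 ∧ p.val.2 ∈ a.val.2.val.1 ∧ p.val.2 ∉ a.val.1.val.1
    then Φ a else 0

/-!
Along a source–sink path of `D_SO^S` the triples `(X, Y, L)` run a queue: an α-arc enqueues an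
element, a β-arc dequeues the head of `L`. Let `t x` and `s x` be the times at which `x` enters
`X` and `Y`. The projection of the path vector is the indicator of `s i < t j`. Since `t ≤ s` and
the queue is first in, first out, that relation is a semiorder.

Conversely, the predecessor sets of a semiorder form a chain, and so do its successor sets. Rank
the elements by a linear order `e` compatible with both chains and put
`t j = e j + #{i | R i j}`, `s i = e i + #{j | ¬ R i j}`. These `2n` times are distinct, fill
`{0, …, 2n - 1}`, satisfy `R i j ↔ s i < t j`, and the queue run along them is a source–sink
path.
As `π` is linear, it maps the convex hull of the path vectors onto the convex hull of their images.
-/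

open Finset

def IsSemiorder {S : Type*} (R : S → S → Prop) : Prop :=
  (∀ i, ¬ R i i) ∧
    (∀ i j i' j', R i j → R i' j' → R i j' ∨ R i' j) ∧
    (∀ i i' i'' j, R i i' → R i' i'' → R i j ∨ R j i'')

theorem isSemiorder_leave_lt_enter {S : Type*} (enter leave : S → ℕ)
    (henter : ∀ i, enter i ≤ leave i)
    (hfifo : ∀ a b, enter a < enter b → leave a < leave b) :
    IsSemiorder fun i j => leave i < enter j := by
  refine ⟨fun i => (henter i).not_gt, fun i j i' j' _ _ => by omega,
    fun i i' i'' j h₁ h₂ => ?_⟩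
  by_contra! h
  have := hfifo j i' (by omega)
  omega

theorem exists_equiv_fin_lt_of_lt {α β : Type*} [Fintype α] [LinearOrder β] (f : α → β) :
    ∃ e : α ≃ Fin (Fintype.card α), ∀ a b, f a < f b → e a < e b := by
  let e₀ := Fintype.equivFin α
  refine ⟨e₀.trans (Tuple.sort (f ∘ e₀.symm)).symm, fun a b hab => ?_⟩
  by_contra! hba
  have := Tuple.monotone_sort (f ∘ e₀.symm) hba
  simp only [Equiv.trans_apply, Function.comp_apply, Equiv.apply_symm_apply,
    Equiv.symm_apply_apply] at this
  exact this.not_gt hab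

theorem Equiv.card_filter_apply_lt {α : Type*} [Fintype α] {n : ℕ} (e : α ≃ Fin n) (a : α) :
    #{x | e x < e a} = e a := by
  rw [card_equiv e (t := Iio (e a)) (by simp), Fin.card_Iio]

namespace IsSemiorder

variable {S : Type*} [Fintype S] {R : S → S → Prop}

/-- Sorting by this key refines both the chain of predecessor sets and the chain of successor
sets. -/
noncomputable def key (R : S → S → Prop) (i : S) : ℕ := #{k | R k i} + #{k | ¬ R i k}

theorem key_lt_of_rel_left (hR : IsSemiorder R) {i i' k : S} (h : R i k) (h' : ¬ R i' k) :
    key R i < key R i' := by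
  refine add_lt_add_of_le_of_lt (card_le_card fun m => ?_) (card_lt_card ?_)
  · simp only [mem_filter_univ]
    exact fun hm => (hR.2.2 m i k i' hm h).resolve_right h'
  · refine ssubset_iff_of_subset (fun x => ?_) |>.2 ⟨k, by simpa using h', by simpa using h⟩
    simp only [mem_filter_univ]
    exact fun hx hx' => (hR.2.1 i k i' x h hx').elim hx h'

theorem key_lt_of_rel_right (hR : IsSemiorder R) {j j' m : S} (h : R m j) (h' : ¬ R m j') :
    key R j' < key R j := by
  refine add_lt_add_of_lt_of_le (card_lt_card ?_) (card_le_card fun x => ?_)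
  · refine ssubset_iff_of_subset (fun x => ?_) |>.2 ⟨m, by simpa using h, by simpa using h'⟩
    simp only [mem_filter_univ]
    exact fun hx => (hR.2.1 m j x j' h hx).resolve_left h'
  · simp only [mem_filter_univ]
    exact fun hx hx' => (hR.2.2 m j x j' h hx').elim h' hx

theorem exists_rank (hR : IsSemiorder R) :
    ∃ e : S ≃ Fin (Fintype.card S),
      (∀ i i' j, R i j → e i' < e i → R i' j) ∧ (∀ i j j', R i j → e j < e j' → R i j') := by
  obtain ⟨e, he⟩ := exists_equiv_fin_lt_of_lt (key R)
  refine ⟨e, fun i i' j hij hlt => ?_, fun i j j' hij hlt => ?_⟩ <;> by_contra h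
  · exact (he _ _ (hR.key_lt_of_rel_left hij h)).not_gt hlt
  · exact (he _ _ (hR.key_lt_of_rel_right hij h)).not_gt hlt

end IsSemiorder

/-- Entry and exit times of the elements of `S` in a first-in-first-out queue, one event at
each of the times `0, …, 2 * card S - 1`. -/
structure FIFOSchedule (S : Type*) [Fintype S] where
  enter : S → ℕ
  leave : S → ℕ
  enter_lt_leave : ∀ i, enter i < leave i
  injective : Function.Injective (Sum.elim enter leave)
  lt_two_mul_card : ∀ x, Sum.elim enter leave x < 2 * Fintype.card S
  leave_lt_leave : ∀ a b, enter a < enter b → leave a < leave b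

section RankSchedule

variable {S : Type*} [Fintype S] (R : S → S → Prop) (e : S ≃ Fin (Fintype.card S))

/-- When `j` enters, the `e j` elements ranked below it have entered and its predecessors
have left. -/
noncomputable def rankEnter (j : S) : ℕ := e j + #{i | R i j}

/-- When `i` leaves, the `e i` elements ranked below it have left and its non-successors have
entered. -/
noncomputable def rankLeave (i : S) : ℕ := e i + #{j | ¬ R i j}

variable {R e}

theorem rankLeave_lt_rankEnter (hdown : ∀ i i' j, R i j → e i' < e i → R i' j)
    (hup : ∀ i j j', R i j → e j < e j' → R i j') {i j : S} (h : R i j) :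
    rankLeave R e i < rankEnter R e j := by
  have hpred : (e i : ℕ) < #{x | R x j} := by
    rw [← e.card_filter_apply_lt i]
    refine card_lt_card (ssubset_iff_of_subset (fun x => ?_) |>.2 ⟨i, by simpa, by simp⟩)
    simpa only [mem_filter_univ] using hdown i x j h
  have hnonsucc : #{y | ¬ R i y} ≤ e j := by
    rw [← e.card_filter_apply_lt j]
    refine card_le_card fun y => ?_
    simp only [mem_filter_univ]
    refine fun hy => lt_of_not_ge fun hle => hy ?_
    rcases hle.lt_or_eq with hlt | heq
    · exact hup i j y h hlt
    · exact e.injective heq ▸ h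
  unfold rankLeave rankEnter
  omega

theorem rankEnter_lt_rankLeave (hdown : ∀ i i' j, R i j → e i' < e i → R i' j)
    (hup : ∀ i j j', R i j → e j < e j' → R i j') {i j : S} (h : ¬ R i j) :
    rankEnter R e j < rankLeave R e i := by
  have hpred : #{x | R x j} ≤ e i := by
    rw [← e.card_filter_apply_lt i]
    refine card_le_card fun x => ?_
    simp only [mem_filter_univ]
    refine fun hx => lt_of_not_ge fun hle => h ?_
    rcases hle.lt_or_eq with hlt | heq
    · exact hdown x i j hx hlt
    · exact e.injective heq ▸ hx
  have hnonsucc : (e j : ℕ) < #{y | ¬ R i y} := by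
    rw [← e.card_filter_apply_lt j]
    refine card_lt_card (ssubset_iff_of_subset (fun y => ?_) |>.2 ⟨j, by simpa, by simp⟩)
    simp only [mem_filter_univ]
    exact fun hy hR => h (hup i y j hR hy)
  unfold rankLeave rankEnter
  omega

theorem strictMono_rankEnter (hup : ∀ i j j', R i j → e j < e j' → R i j') :
    StrictMono (rankEnter R e ∘ e.symm) := fun a b hab => by
  have : #{i | R i (e.symm a)} ≤ #{i | R i (e.symm b)} :=
    card_le_card fun i => by simpa using fun hi => hup i _ _ hi (by simpa using hab)
  simp only [Function.comp_apply, rankEnter, Equiv.apply_symm_apply]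
  omega

theorem strictMono_rankLeave (hdown : ∀ i i' j, R i j → e i' < e i → R i' j) :
    StrictMono (rankLeave R e ∘ e.symm) := fun a b hab => by
  have : #{j | ¬ R (e.symm a) j} ≤ #{j | ¬ R (e.symm b) j} :=
    card_le_card fun j => by simpa using fun hj hb => hj (hdown _ _ j hb (by simpa using hab))
  simp only [Function.comp_apply, rankLeave, Equiv.apply_symm_apply]
  omega

end RankSchedule

theorem IsSemiorder.exists_fifoSchedule {S : Type*} [Fintype S] {R : S → S → Prop}
    (hR : IsSemiorder R) : ∃ σ : FIFOSchedule S, ∀ i j, R i j ↔ σ.leave i < σ.enter j := by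
  obtain ⟨e, hdown, hup⟩ := hR.exists_rank
  have henter := strictMono_rankEnter hup
  have hleave := strictMono_rankLeave hdown
  have hne : ∀ i j, rankEnter R e j ≠ rankLeave R e i := fun i j => by
    by_cases h : R i j
    · exact (rankLeave_lt_rankEnter hdown hup h).ne'
    · exact (rankEnter_lt_rankLeave hdown hup h).ne
  refine ⟨⟨rankEnter R e, rankLeave R e, fun i => rankEnter_lt_rankLeave hdown hup (hR.1 i),
    ((e.symm.injective_comp _).1 henter.injective).sumElim
      ((e.symm.injective_comp _).1 hleave.injective) fun j i => hne i j, ?_, ?_⟩,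
    fun i j => ⟨rankLeave_lt_rankEnter hdown hup, fun h => ?_⟩⟩
  · rintro (j | i)
    · have : #{i | R i j} < Fintype.card S := card_lt_univ_of_notMem (by simpa using hR.1 j)
      simp only [Sum.elim_inl, rankEnter]
      omega
    · have : #{j | ¬ R i j} ≤ Fintype.card S := card_le_univ _
      simp only [Sum.elim_inr, rankLeave]
      omega
  · intro a b hab
    simpa using hleave ((henter.lt_iff_lt (a := e a) (b := e b)).1 (by simpa using hab))
  · by_contra hn
    exact (rankEnter_lt_rankLeave hdown hup hn).not_gt h

theorem MonotoneOn.mem_iff_sInf_le {α : Type*} {F : ℕ → Finset α} {m k : ℕ} {x : α}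
    (hF : MonotoneOn F (Set.Iic m)) (hx : x ∈ F m) (hk : k ≤ m) :
    x ∈ F k ↔ sInf {l | x ∈ F l} ≤ k :=
  ⟨fun h => Nat.sInf_le h, fun h => hF ((Nat.sInf_le hx).trans (by simp)) hk h
    (Nat.sInf_mem (s := {l | x ∈ F l}) ⟨m, hx⟩)⟩

theorem MonotoneOn.eq_of_mem_add_one_of_notMem {α : Type*} {F : ℕ → Finset α} {m k l : ℕ}
    {x : α} (hF : MonotoneOn F (Set.Iic m)) (hk : k < m) (hl : l < m)
    (hxk : x ∈ F (k + 1)) (hxk' : x ∉ F k) (hxl : x ∈ F (l + 1)) (hxl' : x ∉ F l) :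
    k = l := by
  by_contra hne
  rcases Nat.lt_or_gt_of_ne hne with h | h
  · exact hxl' (hF (by simp; omega) (by simp; omega) (by omega) hxk)
  · exact hxk' (hF (by simp; omega) (by simp; omega) (by omega) hxl)

section Network

variable {S : Type*} [Fintype S] [DecidableEq S]

theorem isLinearMap_soProj : IsLinearMap ℝ (soProj S) := by
  constructor
  · intro Φ Ψ
    funext p
    simp only [soProj, Pi.add_apply, ← sum_add_distrib]
    exact sum_congr rfl fun a _ => by split_ifs <;> simp
  · intro c Φ
    funext p
    simp only [soProj, Pi.smul_apply, smul_eq_mul, mul_sum]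
    exact sum_congr rfl fun a _ => by split_ifs <;> simp

theorem SOArcCond.fst_subset {v w : SONode S} (h : SOArcCond v w) : v.val.1 ⊆ w.val.1 := by
  rcases h with ⟨i, -, hX, -⟩ | ⟨j, -, -, hX, -⟩
  · exact hX ▸ subset_insert i _
  · exact hX.ge

theorem SOArcCond.snd_subset {v w : SONode S} (h : SOArcCond v w) : v.val.2.1 ⊆ w.val.2.1 := by
  rcases h with ⟨i, -, -, hY, -⟩ | ⟨j, -, -, -, hY, -⟩
  · exact hY.ge
  · exact hY ▸ subset_insert j _

/-- A source–sink path `u 0, …, u m` of `D_SO^S`; the nodes `u k` with `k > m` play no role. -/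
structure IsSOPath (m : ℕ) (u : ℕ → SONode S) : Prop where
  fst_zero : (u 0).val.1 = ∅
  snd_zero : (u 0).val.2.1 = ∅
  rel_zero : ∀ x y, ¬ (u 0).val.2.2 x y
  fst_last : (u m).val.1 = univ
  snd_last : (u m).val.2.1 = univ
  rel_last : ∀ x y, ¬ (u m).val.2.2 x y
  arc : ∀ k < m, SOArcCond (u k) (u (k + 1))

noncomputable def pathVector (m : ℕ) (u : ℕ → SONode S) : SOArc S → ℝ :=
  fun a => if ∃ k < m, (u k, u (k + 1)) = a.val then 1 else 0

theorem mem_soPathVectors_iff {Φ : SOArc S → ℝ} :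
    Φ ∈ soPathVectors S ↔ ∃ m u, IsSOPath m u ∧ Φ = pathVector m u := by
  constructor
  · rintro ⟨m, v, h0X, h0Y, h0L, hmX, hmY, hmL, harc, rfl⟩
    have hclamp : ∀ k (hk : k < m), Fin.clamp k m = (⟨k, hk⟩ : Fin m).castSucc ∧
        Fin.clamp (k + 1) m = (⟨k, hk⟩ : Fin m).succ :=
      fun k hk => ⟨Fin.ext (by simp [hk.le]), Fin.ext (by simp [hk])⟩
    have h0 : Fin.clamp 0 m = 0 := Fin.ext (by simp)
    have hm : Fin.clamp m m = Fin.last m := Fin.ext (by simp)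
    refine ⟨m, fun k => v (Fin.clamp k m), ⟨by simpa only [h0], by simpa only [h0],
      by simpa only [h0], by simpa only [hm], by simpa only [hm], by simpa only [hm],
      fun k hk => ?_⟩, ?_⟩
    · rw [(hclamp k hk).1, (hclamp k hk).2]
      exact harc _
    · funext a
      simp only [pathVector, Fin.exists_iff]
      congr 1
      refine propext <| exists_congr fun k =>
        ⟨fun ⟨hk, h⟩ => ⟨hk, ?_⟩, fun ⟨hk, h⟩ => ⟨hk, ?_⟩⟩
      · rwa [(hclamp k hk).1, (hclamp k hk).2]
      · rwa [(hclamp k hk).1, (hclamp k hk).2] at h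
  · rintro ⟨m, u, hu, rfl⟩
    refine ⟨m, fun k => u k, hu.fst_zero, hu.snd_zero, hu.rel_zero, hu.fst_last, hu.snd_last,
      hu.rel_last, fun k => hu.arc k k.isLt, ?_⟩
    funext a
    simp [pathVector, Fin.exists_iff]

theorem monotoneOn_fst_of_arc {m : ℕ} {u : ℕ → SONode S}
    (harc : ∀ k < m, SOArcCond (u k) (u (k + 1))) :
    MonotoneOn (fun k => (u k).val.1) (Set.Iic m) :=
  monotoneOn_of_le_add_one Set.ordConnected_Iic fun k _ _ hk => (harc k hk).fst_subset

theorem monotoneOn_snd_of_arc {m : ℕ} {u : ℕ → SONode S}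
    (harc : ∀ k < m, SOArcCond (u k) (u (k + 1))) :
    MonotoneOn (fun k => (u k).val.2.1) (Set.Iic m) :=
  monotoneOn_of_le_add_one Set.ordConnected_Iic fun k _ _ hk => (harc k hk).snd_subset

theorem soProj_pathVector_apply {m : ℕ} {u : ℕ → SONode S}
    (harc : ∀ k < m, SOArcCond (u k) (u (k + 1))) (p : {p : S × S // p.1 ≠ p.2}) :
    soProj S (pathVector m u) p = if ∃ k < m, p.val.1 ∈ (u k).val.2.1 ∧
      p.val.2 ∈ (u (k + 1)).val.1 ∧ p.val.2 ∉ (u k).val.1 then 1 else 0 := by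
  have hX := monotoneOn_fst_of_arc harc
  simp only [soProj, pathVector]
  split_ifs with h
  · obtain ⟨k, hk, hC⟩ := h
    let a : SOArc S := ⟨(u k, u (k + 1)), harc k hk⟩
    refine (sum_eq_single_of_mem a (mem_univ _) fun b _ hba => ?_).trans
      (by rw [if_pos hC, if_pos ⟨k, hk, rfl⟩])
    split_ifs with hbC hb
    · obtain ⟨l, hl, hlb⟩ := hb
      rw [← hlb] at hbC
      obtain rfl := hX.eq_of_mem_add_one_of_notMem hk hl hC.2.1 hC.2.2 hbC.2.1 hbC.2.2
      exact (hba (Subtype.ext hlb.symm)).elim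
    all_goals rfl
  · refine sum_eq_zero fun b _ => ?_
    split_ifs with hbC hb
    · obtain ⟨l, hl, hlb⟩ := hb
      rw [← hlb] at hbC
      exact (h ⟨l, hl, hbC⟩).elim
    all_goals rfl

noncomputable def enterTime (u : ℕ → SONode S) (x : S) : ℕ := sInf {k | x ∈ (u k).val.1}

noncomputable def leaveTime (u : ℕ → SONode S) (x : S) : ℕ := sInf {k | x ∈ (u k).val.2.1}

namespace IsSOPath

variable {m : ℕ} {u : ℕ → SONode S}

theorem mem_fst_iff (hu : IsSOPath m u) {k : ℕ} (hk : k ≤ m) (x : S) :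
    x ∈ (u k).val.1 ↔ enterTime u x ≤ k :=
  (monotoneOn_fst_of_arc hu.arc).mem_iff_sInf_le (by simp [hu.fst_last]) hk

theorem mem_snd_iff (hu : IsSOPath m u) {k : ℕ} (hk : k ≤ m) (x : S) :
    x ∈ (u k).val.2.1 ↔ leaveTime u x ≤ k :=
  (monotoneOn_snd_of_arc hu.arc).mem_iff_sInf_le (by simp [hu.snd_last]) hk

theorem enterTime_le (hu : IsSOPath m u) (x : S) : enterTime u x ≤ m :=
  Nat.sInf_le (by simp [hu.fst_last])

theorem leaveTime_le (hu : IsSOPath m u) (x : S) : leaveTime u x ≤ m :=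
  Nat.sInf_le (by simp [hu.snd_last])

theorem enterTime_le_leaveTime (hu : IsSOPath m u) (x : S) : enterTime u x ≤ leaveTime u x :=
  (hu.mem_fst_iff (hu.leaveTime_le x) x).1
    ((u _).prop.1 (((hu.mem_snd_iff (hu.leaveTime_le x) x).2 le_rfl)))

theorem enterTime_lt_of_rel (hu : IsSOPath m u) {k : ℕ} (hk : k ≤ m) {x y : S}
    (hxy : (u k).val.2.2 x y) :
    enterTime u x < enterTime u y := by
  induction k generalizing x y with
  | zero => exact (hu.rel_zero x y hxy).elim
  | succ k ih =>
    rcases hu.arc k hk with ⟨i, hi, hX, -, hL⟩ | ⟨j, -, -, -, -, hL⟩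
    · rcases (hL x y).1 hxy with h | ⟨hx, rfl⟩
      · exact ih (by omega) h
      · have hxk := (hu.mem_fst_iff (by omega) x).1 (mem_sdiff.1 hx).1
        have hyk := (hu.mem_fst_iff (by omega) y).not.1 hi
        have hyk' := (hu.mem_fst_iff hk y).1 (hX ▸ mem_insert_self y _)
        omega
    · exact ih (by omega) ((hL x y).1 hxy).1

theorem leaveTime_lt_leaveTime (hu : IsSOPath m u) {a b : S}
    (hab : enterTime u a < enterTime u b) :
    leaveTime u a < leaveTime u b := by
  by_contra! hba
  have hb0 : 0 < leaveTime u b := by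
    by_contra! h
    simpa [hu.snd_zero] using (hu.mem_snd_iff (Nat.zero_le m) b).2 h
  obtain ⟨k, hk⟩ : ∃ k, leaveTime u b = k + 1 := ⟨_, (Nat.succ_pred_eq_of_pos hb0).symm⟩
  have hkm : k < m := by have := hu.leaveTime_le b; omega
  have hbk := (hu.mem_snd_iff hkm.le b).not.2 (by omega)
  have hbk' := (hu.mem_snd_iff hkm b).2 hk.le
  rcases hu.arc k hkm with ⟨i, -, -, hY, -⟩ | ⟨j, hj, hmin, -, hY, -⟩
  · exact hbk (hY ▸ hbk')
  · obtain rfl : b = j := (mem_insert.1 (hY ▸ hbk')).resolve_right hbk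
    have hbX := (hu.mem_fst_iff hkm.le b).1 (mem_sdiff.1 hj).1
    have haX := (hu.mem_fst_iff hkm.le a).2 (by omega)
    have haY := (hu.mem_snd_iff hkm.le a).not.2 (by omega)
    have hba := hmin a (mem_sdiff.2 ⟨haX, haY⟩) (by rintro rfl; omega)
    have := hu.enterTime_lt_of_rel hkm.le hba
    omega

theorem isSemiorder (hu : IsSOPath m u) :
    IsSemiorder fun i j => leaveTime u i < enterTime u j :=
  isSemiorder_leave_lt_enter _ _ hu.enterTime_le_leaveTime fun _ _ => hu.leaveTime_lt_leaveTime

theorem soProj_pathVector (hu : IsSOPath m u) :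
    soProj S (pathVector m u) =
      fun p => if leaveTime u p.val.1 < enterTime u p.val.2 then 1 else 0 := by
  funext ⟨⟨i, j⟩, hij⟩
  rw [soProj_pathVector_apply hu.arc]
  dsimp only
  congr 1
  refine propext ⟨fun ⟨k, hk, hi, hj, hj'⟩ => ?_, fun h => ⟨enterTime u j - 1, ?_⟩⟩
  · have := (hu.mem_snd_iff hk.le i).1 hi
    have := (hu.mem_fst_iff hk j).1 hj
    have := (hu.mem_fst_iff hk.le j).not.1 hj'
    omega
  · have := hu.enterTime_le j
    refine ⟨by omega, (hu.mem_snd_iff (by omega) i).2 (by omega),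
      (hu.mem_fst_iff (by omega) j).2 (by omega), (hu.mem_fst_iff (by omega) j).not.2 (by omega)⟩

end IsSOPath

end Network

namespace FIFOSchedule

variable {S : Type*} [Fintype S] (σ : FIFOSchedule S)

theorem enter_injective : Function.Injective σ.enter :=
  σ.injective.comp Sum.inl_injective

theorem leave_injective : Function.Injective σ.leave :=
  σ.injective.comp Sum.inr_injective

theorem enter_ne_leave (i j : S) : σ.enter j ≠ σ.leave i :=
  fun h => Sum.inl_ne_inr (σ.injective h)

theorem enter_lt_enter {a b : S} (h : σ.leave a < σ.leave b) : σ.enter a < σ.enter b := by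
  rcases lt_trichotomy (σ.enter a) (σ.enter b) with hab | hab | hab
  · exact hab
  · exact absurd (σ.enter_injective hab ▸ h) (lt_irrefl _)
  · exact absurd (σ.leave_lt_leave b a hab) h.not_gt

theorem exists_enter_eq_or_leave_eq {k : ℕ} (hk : k < 2 * Fintype.card S) :
    (∃ j, σ.enter j = k) ∨ ∃ i, σ.leave i = k := by
  let f : S ⊕ S → Fin (2 * Fintype.card S) :=
    fun x => ⟨Sum.elim σ.enter σ.leave x, σ.lt_two_mul_card x⟩
  have hf : Function.Bijective f := (Fintype.bijective_iff_injective_and_card f).2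
    ⟨fun x y h => σ.injective (Fin.ext_iff.1 h), by simp [two_mul]⟩
  obtain ⟨x | x, hx⟩ := hf.2 ⟨k, hk⟩
  · exact Or.inl ⟨x, Fin.ext_iff.1 hx⟩
  · exact Or.inr ⟨x, Fin.ext_iff.1 hx⟩

variable [DecidableEq S]

def nodeRel (k : ℕ) (x y : S) : Prop :=
  (σ.enter x < k ∧ k ≤ σ.leave x) ∧ (σ.enter y < k ∧ k ≤ σ.leave y) ∧
    σ.enter x < σ.enter y

theorem isStrictLinearOrderOn_nodeRel (k : ℕ) :
    IsStrictLinearOrderOn (({x | σ.enter x < k} : Finset S) \ ({x | σ.leave x < k} : Finset S))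
      (σ.nodeRel k) := by
  refine ⟨fun x y h => ?_, fun x h => lt_irrefl _ h.2.2,
    fun x y z h h' => ⟨h.1, h'.2.1, h.2.2.trans h'.2.2⟩, fun x hx y hy hxy => ?_⟩
  · simp only [mem_sdiff, mem_filter_univ, not_lt]
    exact ⟨h.1, h.2.1⟩
  · simp only [mem_sdiff, mem_filter_univ, not_lt] at hx hy
    rcases lt_or_gt_of_ne (σ.enter_injective.ne hxy) with h | h
    · exact Or.inl ⟨hx, hy, h⟩
    · exact Or.inr ⟨hy, hx, h⟩

noncomputable def node (k : ℕ) : SONode S :=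
  ⟨(({x | σ.enter x < k} : Finset S), ({x | σ.leave x < k} : Finset S), σ.nodeRel k),
    fun x => by simpa using fun h => (σ.enter_lt_leave x).trans h,
    σ.isStrictLinearOrderOn_nodeRel k⟩

theorem arc_of_enter_eq {j : S} {k : ℕ} (hj : σ.enter j = k) :
    SOArcCond (σ.node k) (σ.node (k + 1)) := by
  subst hj
  have hx : ∀ x, σ.enter x = σ.enter j ↔ x = j := fun x => σ.enter_injective.eq_iff
  have hs : ∀ x, σ.leave x ≠ σ.enter j := fun x => (σ.enter_ne_leave x j).symm
  refine Or.inl ⟨j, by simp [node], ?_, ?_, fun x y => ?_⟩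
  · ext x
    have := hx x
    simp only [node, mem_filter_univ, mem_insert]
    grind
  · ext x
    have := hs x
    simp only [node, mem_filter_univ]
    omega
  · have := hx x; have := hx y; have := hs x; have := hs y
    have := σ.enter_lt_leave x; have := σ.enter_lt_leave y
    simp only [node, nodeRel, mem_sdiff, mem_filter_univ]
    grind

theorem arc_of_leave_eq {i : S} {k : ℕ} (hi : σ.leave i = k) :
    SOArcCond (σ.node k) (σ.node (k + 1)) := by
  subst hi
  have hx : ∀ x, σ.leave x = σ.leave i ↔ x = i := fun x => σ.leave_injective.eq_iff
  have ht : ∀ x, σ.enter x ≠ σ.leave i := fun x => σ.enter_ne_leave i x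
  have hti := σ.enter_lt_leave i
  refine Or.inr ⟨i, by simpa [node], fun x hx' hxi => ?_, ?_, ?_, fun x y => ?_⟩
  · simp only [node, mem_sdiff, mem_filter_univ, not_lt] at hx'
    have := σ.enter_lt_enter (a := i) (b := x) (by have := (hx x).not.2 hxi; omega)
    exact ⟨⟨by omega, by omega⟩, hx', this⟩
  · ext x
    have := ht x
    simp only [node, mem_filter_univ]
    omega
  · ext x
    have := hx x
    simp only [node, mem_filter_univ, mem_insert]
    grind
  · have := hx x; have := hx y; have := ht x; have := ht y
    simp only [node, nodeRel]
    grind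

theorem isSOPath : IsSOPath (2 * Fintype.card S) σ.node where
  fst_zero := by simp [node]
  snd_zero := by simp [node]
  rel_zero x y h := Nat.not_lt_zero _ h.1.1
  fst_last := by simpa [node] using fun x => σ.lt_two_mul_card (.inl x)
  snd_last := by simpa [node] using fun x => σ.lt_two_mul_card (.inr x)
  rel_last x y h := (σ.lt_two_mul_card (.inr x)).not_ge h.1.2
  arc k hk := (σ.exists_enter_eq_or_leave_eq hk).elim (fun ⟨_, hj⟩ => σ.arc_of_enter_eq hj)
    fun ⟨_, hi⟩ => σ.arc_of_leave_eq hi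

theorem enterTime_node (x : S) : enterTime σ.node x = σ.enter x + 1 :=
  (Nat.sInf_upward_closed_eq_succ_iff (fun _ _ h h' => by simp [node] at *; omega) _).2
    (by simp [node])

theorem leaveTime_node (x : S) : leaveTime σ.node x = σ.leave x + 1 :=
  (Nat.sInf_upward_closed_eq_succ_iff (fun _ _ h h' => by simp [node] at *; omega) _).2
    (by simp [node])

end FIFOSchedule

/-- The projection `π` maps the flow polytope `F(D_SO^S)` (the convex hull of the
characteristic vectors of arc sets of source–sink paths) onto the semiorder polytope
`P_SO^S` (the convex hull of the characteristic vectors of all semiorders on `S`). -/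
theorem soProj_image_flowPolytope (S : Type*) [Fintype S] [DecidableEq S] :
    soProj S '' convexHull ℝ (soPathVectors S) =
      convexHull ℝ
        {x : {p : S × S // p.1 ≠ p.2} → ℝ |
          ∃ R : S → S → Prop,
            ((∀ i, ¬ R i i) ∧
              (∀ i j i' j', R i j → R i' j' → R i j' ∨ R i' j) ∧
              (∀ i i' i'' j, R i i' → R i' i'' → R i j ∨ R j i'')) ∧
            x = fun p => if R p.val.1 p.val.2 then 1 else 0} := by
  rw [isLinearMap_soProj.image_convexHull]
  congr 1
  ext x
  constructor
  · rintro ⟨Φ, hΦ, rfl⟩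
    obtain ⟨m, u, hu, rfl⟩ := mem_soPathVectors_iff.1 hΦ
    exact ⟨fun i j => leaveTime u i < enterTime u j, hu.isSemiorder,
      by convert hu.soProj_pathVector⟩
  · rintro ⟨R, hR, rfl⟩
    obtain ⟨σ, hσ⟩ := IsSemiorder.exists_fifoSchedule hR
    refine ⟨_, mem_soPathVectors_iff.2 ⟨_, _, σ.isSOPath, rfl⟩, ?_⟩
    simp only [σ.isSOPath.soProj_pathVector, σ.enterTime_node, σ.leaveTime_node, hσ,
      Nat.add_lt_add_iff_right]
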